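/- Let Γ be a finite group acting faithfully on a finite set X, and let k be a positive integer with |Γ| ≤ k!. Then there exists a distinguishing labeling φ : X → {1,…,k}; that is, D_Γ(X) ≤ k. -/

import Mathlib

/-!
Induct on `|X|`. Pick a point `x`. If its orbit has at most `k` points, label the orbit injectively
and recurse on the complement of the orbit, which is again a `Γ`-set. Otherwise, by
orbit–stabilizer, `|Stab x| ≤ k!/(k+1) ≤ (k-1)!`; give `x` a label of its own and recurse on the
remaining points with the stabilizer and the other `k - 1` labels. A label-preserving element then
fixes `x`, hence lies in the stabilizer, hence fixes everything.
-/

/-- The recursion passes to actions that need not be faithful (the complement of an orbit, the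
stabilizer on the other points), so a distinguishing labeling only forces `g` to act trivially;
for faithful actions this is the usual notion, see `IsDistinguishing.eq_one`. -/
def IsDistinguishing (G : Type*) {X α : Type*} [SMul G X] (f : X → α) : Prop :=
  ∀ g : G, (∀ x, f (g • x) = f x) → ∀ x : X, g • x = x

section

open MulAction Nat

variable {G X : Type*} [Group G] [MulAction G X]

theorem IsDistinguishing.eq_one [FaithfulSMul G X] {α : Type*} {f : X → α}
    (hf : IsDistinguishing G f) {g : G} (hg : ∀ x, f (g • x) = f x) : g = 1 :=
  eq_of_smul_eq_smul fun x => by rw [hf g hg x, one_smul]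

theorem isDistinguishing_of_isEmpty [IsEmpty X] {α : Type*} (f : X → α) :
    IsDistinguishing G f :=
  fun _ _ x => isEmptyElim x

variable (G) in
def SubMulAction.complOrbit (x : X) : SubMulAction G X where
  carrier := (orbit G x)ᶜ
  smul_mem' g y hy := by
    rwa [Set.mem_compl_iff, mem_orbit_symm, orbit_smul, ← mem_orbit_symm]

theorem IsDistinguishing.dite_complOrbit {x : X} [DecidablePred (· ∈ orbit G x)] {α : Type*}
    {ψ : SubMulAction.complOrbit G x → α} (hψ : IsDistinguishing G ψ) {ι : orbit G x → α}
    (hι : Function.Injective ι) :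
    IsDistinguishing G fun y => if h : y ∈ orbit G x then ι ⟨y, h⟩ else ψ ⟨y, h⟩ := by
  intro g hg y
  by_cases hy : y ∈ orbit G x
  · have hgy : g • y ∈ orbit G x := mem_orbit_of_mem_orbit g hy
    have := hg y
    simp only [dif_pos hy, dif_pos hgy] at this
    exact congrArg Subtype.val (hι this)
  · refine congrArg Subtype.val (hψ g (fun z => ?_) ⟨y, hy⟩)
    have hgz : g • (z : X) ∉ orbit G x := (SubMulAction.complOrbit G x).smul_mem g z.2
    have := hg z
    simp only [dif_neg z.2, dif_neg hgz] at this
    exact this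

theorem IsDistinguishing.dite_ofStabilizer {x : X} [DecidableEq X] {m : ℕ}
    {ψ : SubMulAction.ofStabilizer G x → Fin m} (hψ : IsDistinguishing (stabilizer G x) ψ) :
    IsDistinguishing G fun y => if h : y = x then (0 : Fin (m + 1)) else (ψ ⟨y, h⟩).succ := by
  intro g hg y
  have hgx : g • x = x := by
    by_contra hne
    simpa [hne] using hg x
  by_cases hy : y = x
  · rwa [hy]
  · refine congrArg Subtype.val (hψ ⟨g, hgx⟩ (fun z => ?_) ⟨y, hy⟩)
    have hgz : g • (z : X) ≠ x := (SubMulAction.ofStabilizer G x).smul_mem ⟨g, hgx⟩ z.2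
    have hz : (z : X) ≠ x := z.2
    have := hg z
    simp only [dif_neg hz, dif_neg hgz, Fin.succ_inj] at this
    exact this

theorem card_stabilizer_le_factorial_of_lt_card_orbit [Finite G] {x : X} {m : ℕ}
    (hG : Nat.card G ≤ (m + 1)!) (hx : m + 1 < Nat.card (orbit G x)) :
    0 < m ∧ Nat.card (stabilizer G x) ≤ m ! := by
  have hs : 0 < Nat.card (stabilizer G x) := Nat.card_pos
  have hcard : Nat.card (stabilizer G x) * (m + 2) ≤ (m + 1) * m ! :=
    calc Nat.card (stabilizer G x) * (m + 2)
        ≤ Nat.card (stabilizer G x) * Nat.card (orbit G x) := Nat.mul_le_mul_left _ hx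
      _ = Nat.card G := by rw [Nat.card_coe_set_eq, ← index_stabilizer, Subgroup.card_mul_index]
      _ ≤ (m + 1) * m ! := hG
  have hlt : Nat.card (stabilizer G x) < m ! := by nlinarith
  refine ⟨Nat.pos_of_ne_zero fun hm => ?_, hlt.le⟩
  rw [hm, Nat.factorial_zero] at hlt
  omega

theorem exists_isDistinguishing_of_card_le_factorial [Finite G] [Finite X] {k : ℕ} (hk : 0 < k)
    (hG : Nat.card G ≤ k !) : ∃ f : X → Fin k, IsDistinguishing G f := by
  classical
  induction hn : Nat.card X using Nat.strong_induction_on generalizing G X k with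
  | _ n ih =>
  cases isEmpty_or_nonempty X with
  | inl _ => exact ⟨fun _ => ⟨0, hk⟩, isDistinguishing_of_isEmpty _⟩
  | inr hX =>
  obtain ⟨x⟩ := hX
  by_cases hO : Nat.card (orbit G x) ≤ k
  · obtain ⟨ψ, hψ⟩ := ih _ (hn ▸ Finite.card_subtype_lt (x := x) (not_not.2 (mem_orbit_self x)))
      (X := SubMulAction.complOrbit G x) hk hG rfl
    let ι : orbit G x ↪ Fin k := (Finite.equivFin _).toEmbedding.trans (Fin.castLEEmb hO)
    exact ⟨_, hψ.dite_complOrbit ι.injective⟩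
  · obtain ⟨m, rfl⟩ : ∃ m, k = m + 1 := ⟨k - 1, by omega⟩
    obtain ⟨hm, hstab⟩ := card_stabilizer_le_factorial_of_lt_card_orbit hG (not_le.1 hO)
    obtain ⟨ψ, hψ⟩ := ih _ (hn ▸ Finite.card_subtype_lt (x := x) fun h => h rfl)
      (X := SubMulAction.ofStabilizer G x) hm hstab rfl
    exact ⟨_, hψ.dite_ofStabilizer⟩

end

/-- If a finite group `Γ` acts faithfully on a finite set `X` and `|Γ| ≤ k!`, then there is a
distinguishing labeling of `X` with `k` labels, i.e. `D_Γ(X) ≤ k`. -/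
theorem distinguishing_le_of_card_le_factorial {Γ X : Type*} [Group Γ] [Fintype Γ] [Fintype X]
    [MulAction Γ X] [FaithfulSMul Γ X]
    (k : ℕ) (hk : 0 < k) (h : Fintype.card Γ ≤ Nat.factorial k) :
    ∃ φ : X → Fin k, ∀ γ : Γ, (∀ x : X, φ (γ • x) = φ x) → γ = 1 := by
  obtain ⟨f, hf⟩ := exists_isDistinguishing_of_card_le_factorial (G := Γ) (X := X) hk
    (by rwa [Nat.card_eq_fintype_card])
  exact ⟨f, fun γ => hf.eq_one⟩
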